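/- Let G be a semi-Markovian causal graph with observed variables V, let 𝔸 be a finite collection of subsets of V, and let Y ⊊ W ⊊ V be such that for every W′ ∈ W ∖ Y there exists a directed path in G[W] from W′ to some variable in Y. Then the causal effect of V ∖ W on Y is g-identifiable from (𝔸, G) if and only if Q[W] is g-identifiable from (𝔸, G). -/

import Mathlib

open scoped Classical

/-- A semi-Markovian causal graph: a DAG over a finite vertex set partitioned into
observed (`obs`) and unobserved (`unobs`) variables, where every unobserved variable
has no parents and exactly two (distinct, observed) children. -/
structure CausalGraph (ν : Type) [Fintype ν] [DecidableEq ν] where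
  obs : Finset ν
  unobs : Finset ν
  disj : Disjoint obs unobs
  E : ν → ν → Prop
  edge_mem : ∀ x y, E x y → x ∈ obs ∪ unobs ∧ y ∈ obs ∪ unobs
  acyclic : ∀ x, ¬ Relation.TransGen E x x
  unobs_no_parent : ∀ u ∈ unobs, ∀ w, ¬ E w u
  unobs_two_children : ∀ u ∈ unobs,
    ∃ a b, a ≠ b ∧ a ∈ obs ∧ b ∈ obs ∧ (∀ w, E u w ↔ w = a ∨ w = b)

namespace CausalGraph

variable {ν : Type} [Fintype ν] [DecidableEq ν]

def verts (G : CausalGraph ν) : Finset ν := G.obs ∪ G.unobs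

/-- A structural equation model over the causal graph `G`: finite nonempty domains
(encoded as finite sets of naturals), a pmf for each unobserved variable, and a
conditional pmf (given an assignment to the parents) for each observed variable. -/
structure SEM (G : CausalGraph ν) where
  dom : ν → Finset ℕ
  dom_ne : ∀ x, (dom x).Nonempty
  pU : ν → ℕ → ℝ
  pU_nonneg : ∀ u n, 0 ≤ pU u n
  pU_sum : ∀ u ∈ G.unobs, ∑ n ∈ dom u, pU u n = 1
  pO : ν → ℕ → (ν → ℕ) → ℝ
  pO_nonneg : ∀ x n pa, 0 ≤ pO x n pa
  pO_sum : ∀ x ∈ G.obs, ∀ pa : ν → ℕ, ∑ n ∈ dom x, pO x n pa = 1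
  pO_par : ∀ x n (pa pa' : ν → ℕ), (∀ p, G.E p x → pa p = pa' p) → pO x n pa = pO x n pa'

namespace SEM

variable {G : CausalGraph ν}

/-- Full assignments: all variables of `G` get values in their domains
(non-vertices are pinned to `0`). -/
noncomputable def fullAssign (M : SEM G) : Finset (ν → ℕ) :=
  Fintype.piFinset (fun x => if x ∈ G.verts then M.dom x else {0})

/-- Observed assignments `dom(V)`: observed variables get values in their domains
(all other coordinates are pinned to `0`). -/
noncomputable def obsAssign (M : SEM G) : Finset (ν → ℕ) :=
  Fintype.piFinset (fun x => if x ∈ G.obs then M.dom x else {0})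

/-- `Q^M[S](v) = Σ_u Π_{X ∈ S} P(x | pa_G(X)) Π_{U} P(u)`. -/
noncomputable def Q (M : SEM G) (S : Finset ν) (v : ν → ℕ) : ℝ :=
  ∑ w ∈ M.fullAssign.filter (fun w => ∀ x ∈ G.obs, w x = v x),
    (∏ x ∈ S, M.pO x (w x) w) * ∏ u ∈ G.unobs, M.pU u (w u)

/-- The observational distribution `P^M(v) = Q^M[V](v)`. -/
noncomputable def P (M : SEM G) (v : ν → ℕ) : ℝ := M.Q G.obs v

/-- Post-interventional probability `P^M_x(y)`: sum of `Q^M[V∖X]` over all observed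
realizations consistent with `x` on `X` and `y` on `Y`. -/
noncomputable def Px (M : SEM G) (X : Finset ν) (x : ν → ℕ) (Y : Finset ν) (y : ν → ℕ) : ℝ :=
  ∑ v ∈ M.obsAssign.filter (fun v => (∀ i ∈ X, v i = x i) ∧ (∀ i ∈ Y, v i = y i)),
    M.Q (G.obs \ X) v

/-- `M ∈ 𝕄⁺(G)`: strictly positive observational distribution. -/
def positive (M : SEM G) : Prop := ∀ v ∈ M.obsAssign, 0 < M.P v

end SEM

/-- The causal effect of `X` on `Y` is identifiable from `G`. -/
def Identifiable (G : CausalGraph ν) (X Y : Finset ν) : Prop :=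
  ∀ M₁ M₂ : SEM G, M₁.positive → M₂.positive →
    (∀ i ∈ G.obs, M₁.dom i = M₂.dom i) →
    (∀ v ∈ M₁.obsAssign, M₁.P v = M₂.P v) →
    ∀ x y : ν → ℕ, (∀ i ∈ X, x i ∈ M₁.dom i) → (∀ i ∈ Y, y i ∈ M₁.dom i) →
      M₁.Px X x Y y = M₂.Px X x Y y

/-- `Q[S]` is identifiable from `G`. -/
def QIdentifiable (G : CausalGraph ν) (S : Finset ν) : Prop :=
  Identifiable G (G.obs \ S) S

/-- The causal effect of `X` on `Y` is g-identifiable from `(𝔸, G)`. -/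
def GIdentifiable (G : CausalGraph ν) (𝔸 : Finset (Finset ν)) (X Y : Finset ν) : Prop :=
  ∀ M₁ M₂ : SEM G, M₁.positive → M₂.positive →
    (∀ i ∈ G.obs, M₁.dom i = M₂.dom i) →
    (∀ A ∈ 𝔸, ∀ v ∈ M₁.obsAssign, M₁.Q A v = M₂.Q A v) →
    ∀ x y : ν → ℕ, (∀ i ∈ X, x i ∈ M₁.dom i) → (∀ i ∈ Y, y i ∈ M₁.dom i) →
      M₁.Px X x Y y = M₂.Px X x Y y

/-- `Q[S]` is g-identifiable from `(𝔸, G)`. -/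
def QGIdentifiable (G : CausalGraph ν) (𝔸 : Finset (Finset ν)) (S : Finset ν) : Prop :=
  GIdentifiable G 𝔸 (G.obs \ S) S

/-- Bidirected edge of `G_X` between `a` and `b`: distinct members of `X` sharing an
unobserved parent (whose two children then necessarily both lie in `X`). -/
def biEdge (G : CausalGraph ν) (X : Finset ν) (a b : ν) : Prop :=
  a ≠ b ∧ a ∈ X ∧ b ∈ X ∧ ∃ u ∈ G.unobs, G.E u a ∧ G.E u b

/-- `X` is a single c-component of `G`. -/
def SingleC (G : CausalGraph ν) (X : Finset ν) : Prop :=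
  X.Nonempty ∧ ∀ a ∈ X, ∀ b ∈ X, Relation.ReflTransGen (G.biEdge X) a b

/-- The c-components of `S`: connected components of the bidirected part of `G_S`. -/
noncomputable def cComponents (G : CausalGraph ν) (S : Finset ν) : Finset (Finset ν) :=
  S.image (fun a => S.filter (fun b => Relation.ReflTransGen (G.biEdge S) a b))

/-- Directed edge of `G_X` (both endpoints in `X`). -/
def dirEdgeIn (G : CausalGraph ν) (X : Finset ν) (a b : ν) : Prop :=
  a ∈ X ∧ b ∈ X ∧ G.E a b

/-- `Anc_Y(G_X)`: members of `X` having a directed path in `G_X` to some member of `Y`. -/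
noncomputable def ancIn (G : CausalGraph ν) (X Y : Finset ν) : Finset ν :=
  X.filter (fun a => ∃ y ∈ Y, Relation.ReflTransGen (G.dirEdgeIn X) a y)

/-- Unobserved vertices of the induced subgraph `G[A]`: unobserved vertices of `G`
both of whose children lie in `A`. -/
noncomputable def inducedUnobs (G : CausalGraph ν) (A : Finset ν) : Finset ν :=
  G.unobs.filter (fun u => ∀ w, G.E u w → w ∈ A)

/-- The induced subgraph `G[A]`. -/
noncomputable def induced (G : CausalGraph ν) (A : Finset ν) : CausalGraph ν where
  obs := A ∩ G.obs
  unobs := G.inducedUnobs A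
  disj := G.disj.mono Finset.inter_subset_right (Finset.filter_subset _ _)
  E x y := G.E x y ∧ x ∈ (A ∩ G.obs) ∪ G.inducedUnobs A ∧ y ∈ (A ∩ G.obs) ∪ G.inducedUnobs A
  edge_mem := fun x y h => ⟨h.2.1, h.2.2⟩
  acyclic := fun x h => G.acyclic x
    (Relation.TransGen.mono (p := G.E) (by intro a b hab; exact hab.1) x x h)
  unobs_no_parent := fun u hu w hw =>
    G.unobs_no_parent u (Finset.mem_filter.mp hu).1 w hw.1
  unobs_two_children := by
    intro u hu
    have hu' := Finset.mem_filter.mp hu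
    obtain ⟨a, b, hab, ha, hb, hiff⟩ := G.unobs_two_children u hu'.1
    have hEa : G.E u a := (hiff a).mpr (Or.inl rfl)
    have hEb : G.E u b := (hiff b).mpr (Or.inr rfl)
    have haA : a ∈ A := hu'.2 a hEa
    have hbA : b ∈ A := hu'.2 b hEb
    refine ⟨a, b, hab, Finset.mem_inter.mpr ⟨haA, ha⟩, Finset.mem_inter.mpr ⟨hbA, hb⟩, ?_⟩
    intro w
    constructor
    · intro hw; exact (hiff w).mp hw.1
    · rintro (rfl | rfl)
      · exact ⟨hEa, Finset.mem_union.mpr (Or.inr hu),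
          Finset.mem_union.mpr (Or.inl (Finset.mem_inter.mpr ⟨haA, ha⟩))⟩
      · exact ⟨hEb, Finset.mem_union.mpr (Or.inr hu),
          Finset.mem_union.mpr (Or.inl (Finset.mem_inter.mpr ⟨hbA, hb⟩))⟩

/-- `H` is a subgraph of `G`. -/
def IsSubgraph (H G : CausalGraph ν) : Prop :=
  H.obs ⊆ G.obs ∧ H.unobs ⊆ G.unobs ∧ ∀ a b, H.E a b → G.E a b

/-- `H` is an `R`-rooted c-forest: `R` is the root set of `H`, the observed vertex set of
`H` is a single c-component, and every observed vertex has at most one child in `H`. -/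
def IsCForest (H : CausalGraph ν) (R : Finset ν) : Prop :=
  H.obs.filter (fun x => ∀ w, ¬ H.E x w) = R ∧
  H.SingleC H.obs ∧
  ∀ x ∈ H.obs, ∀ w w', H.E x w → H.E x w' → w = w'

end CausalGraph

/-!
The effect of `V ∖ W` on `Y` is a sum of values of `Q[W]`, which gives one direction.

Conversely, given two positive models that agree on every `Q[A]`, `A ∈ 𝔸`, extend both:
every `Z ∈ W` additionally emits a payload that records the values of all its ancestors in
`G[W]`, computed by merging the values and payloads of its parents, except that with
probability `ε` the payload is uniform noise, which keeps the extended models positive. The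
payload mechanisms are the same in both models, so the extensions still agree on every
`Q[A]`, and by hypothesis on the effect of `V ∖ W` on `Y`. That effect is a polynomial in `ε`.
At `ε = 0`, since every vertex of `W ∖ Y` is an ancestor of `Y` in `G[W]`, the payloads seen on
`Y` pin down the values on all of `W`, so the effect reduces to a single value of `Q[W]`, which
is therefore the same in both models by continuity.
-/

namespace CausalGraph

open Relation

variable {ν : Type} [Fintype ν]

noncomputable def encodePayload : (ν → ℕ) → ℕ :=
  (Countable.exists_injective_nat (ν → ℕ)).choose

lemma encodePayload_injective : Function.Injective (encodePayload (ν := ν)) :=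
  (Countable.exists_injective_nat (ν → ℕ)).choose_spec

noncomputable def decodePayload : ℕ → ν → ℕ := Function.invFun encodePayload

@[simp] lemma decodePayload_encodePayload (f : ν → ℕ) : decodePayload (encodePayload f) = f :=
  Function.leftInverse_invFun encodePayload_injective f

variable [DecidableEq ν]

lemma wellFounded_E (G : CausalGraph ν) : WellFounded G.E := by
  have : IsTrans ν (TransGen G.E) := ⟨fun _ _ _ => TransGen.trans⟩
  have : Std.Irrefl (TransGen G.E) := ⟨G.acyclic⟩
  exact Subrelation.wf TransGen.single (Finite.wellFounded_of_trans_of_irrefl _)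

lemma mem_of_transGen_dirEdgeIn {G : CausalGraph ν} {W : Finset ν} {p Z : ν}
    (h : TransGen (G.dirEdgeIn W) p Z) : p ∈ W := by
  obtain ⟨_, hp, _⟩ := TransGen.head'_iff.1 h
  exact hp.1

noncomputable def payloadCodes (ν : Type) [Fintype ν] [DecidableEq ν] (B : ℕ) : Finset ℕ :=
  (Fintype.piFinset fun _ : ν => Finset.range (B + 1)).image encodePayload

lemma encodePayload_mem_payloadCodes {B : ℕ} {f : ν → ℕ} (hf : ∀ p, f p ≤ B) :
    encodePayload f ∈ payloadCodes ν B :=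
  Finset.mem_image_of_mem _ (Fintype.mem_piFinset.2 fun p => Finset.mem_range.2 (by grind))

lemma payloadCodes_nonempty (B : ℕ) : (payloadCodes ν B).Nonempty :=
  ⟨_, encodePayload_mem_payloadCodes (f := 0) fun _ => Nat.zero_le _⟩

namespace SEM

variable {G : CausalGraph ν}

lemma mem_obsAssign {M : SEM G} {v : ν → ℕ} :
    v ∈ M.obsAssign ↔ (∀ p ∈ G.obs, v p ∈ M.dom p) ∧ ∀ p ∉ G.obs, v p = 0 := by
  simp only [obsAssign, Fintype.mem_piFinset]
  refine ⟨fun h => ⟨fun p hp => by simpa [hp] using h p, fun p hp => by simpa [hp] using h p⟩,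
    fun h p => ?_⟩
  by_cases hp : p ∈ G.obs <;> simp [hp, h.1, h.2]

lemma obsAssign_congr {M₁ M₂ : SEM G} (h : ∀ i ∈ G.obs, M₁.dom i = M₂.dom i) :
    M₁.obsAssign = M₂.obsAssign := by
  ext v
  simp +contextual only [mem_obsAssign, h]

lemma Px_congr (M : SEM G) (X Y : Finset ν) {x x' y y' : ν → ℕ} (hx : ∀ i ∈ X, x i = x' i)
    (hy : ∀ i ∈ Y, y i = y' i) : M.Px X x Y y = M.Px X x' Y y' := by
  simp +contextual only [Px, hx, hy]

lemma Px_self (M : SEM G) {X Y : Finset ν} (hXY : G.obs ⊆ X ∪ Y) {v : ν → ℕ}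
    (hv : v ∈ M.obsAssign) : M.Px X v Y v = M.Q (G.obs \ X) v := by
  have hsingle : M.obsAssign.filter (fun v' => (∀ i ∈ X, v' i = v i) ∧ ∀ i ∈ Y, v' i = v i)
      = {v} := by
    refine Finset.eq_singleton_iff_unique_mem.2 ⟨by simp [hv], fun v' hv' => ?_⟩
    obtain ⟨hv'mem, hX, hY⟩ := Finset.mem_filter.1 hv'
    funext p
    by_cases hp : p ∈ G.obs
    · rcases Finset.mem_union.1 (hXY hp) with h | h
      exacts [hX p h, hY p h]
    · rw [(mem_obsAssign.1 hv'mem).2 p hp, (mem_obsAssign.1 hv).2 p hp]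
  rw [Px, hsingle, Finset.sum_singleton]

end SEM

section Reduction

variable {G : CausalGraph ν} {𝔸 : Finset (Finset ν)} {W : Finset ν}

theorem QGIdentifiable.gIdentifiable (h : G.QGIdentifiable 𝔸 W) (hW : W ⊆ G.obs)
    (Y : Finset ν) :
    G.GIdentifiable 𝔸 (G.obs \ W) Y := by
  intro M₁ M₂ h₁ h₂ hdom hQ x y _ _
  rw [SEM.Px, SEM.Px, SEM.obsAssign_congr (M₂ := M₁) fun i hi => (hdom i hi).symm]
  refine Finset.sum_congr rfl fun v hv => ?_
  have hv₁ := (Finset.mem_filter.1 hv).1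
  have hv₂ : v ∈ M₂.obsAssign := SEM.obsAssign_congr hdom ▸ hv₁
  have hobs : G.obs ⊆ (G.obs \ W) ∪ W := by simp
  rw [← SEM.Px_self M₁ hobs hv₁, ← SEM.Px_self M₂ hobs hv₂]
  have hvdom := (SEM.mem_obsAssign.1 hv₁).1
  exact h M₁ M₂ h₁ h₂ hdom hQ v v (fun i hi => hvdom i (Finset.mem_sdiff.1 hi).1)
    fun i hi => hvdom i (hW hi)

end Reduction

section Payload

variable (G : CausalGraph ν) (W : Finset ν) (B : ℕ)

/-- On `W`, a value of the extended model is `Nat.pair` of an original value and a payload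
code; this reads off the original values. -/
def origVal (u : ν → ℕ) (p : ν) : ℕ := if p ∈ W then (u p).unpair.1 else u p

noncomputable def payload (u : ν → ℕ) (q : ν) : ν → ℕ := decodePayload (u q).unpair.2

noncomputable def ancPayload (z : ν → ℕ) (Z : ν) : ν → ℕ := fun p =>
  if TransGen (G.dirEdgeIn W) p Z then z p else 0

/-- The truncation at `B` keeps payloads in the finite domain `payloadCodes ν B`. -/
noncomputable def mergedPayload (Z : ν) (u : ν → ℕ) : ν → ℕ := fun p =>
  min B (max (if G.dirEdgeIn W p Z then origVal W u p else 0)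
    ((Finset.univ.filter (G.dirEdgeIn W · Z)).sup fun q => payload u q p))

def PayloadConsistent (u : ν → ℕ) : Prop :=
  ∀ Z ∈ W, (u Z).unpair.2 = encodePayload (mergedPayload G W B Z u)

noncomputable def withPayload (v : ν → ℕ) : ν → ℕ := fun p =>
  if p ∈ W then Nat.pair (v p) (encodePayload (ancPayload G W v p)) else v p

variable {G W B}

lemma ancPayload_congr {z z' : ν → ℕ} (h : ∀ p ∈ W, z p = z' p) (Z : ν) :
    ancPayload G W z Z = ancPayload G W z' Z := by
  funext p
  unfold ancPayload
  split_ifs with hp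
  · rw [h p (mem_of_transGen_dirEdgeIn hp)]
  · rfl

lemma mergedPayload_le (Z : ν) (u : ν → ℕ) (p : ν) : mergedPayload G W B Z u p ≤ B :=
  min_le_left _ _

lemma mergedPayload_congr {Z : ν} {u u' : ν → ℕ} (h : ∀ q, G.dirEdgeIn W q Z → u q = u' q) :
    mergedPayload G W B Z u = mergedPayload G W B Z u' := by
  funext p
  have hsup : ((Finset.univ.filter (G.dirEdgeIn W · Z)).sup fun q => payload u q p) =
      (Finset.univ.filter (G.dirEdgeIn W · Z)).sup fun q => payload u' q p :=
    Finset.sup_congr rfl fun q hq => by rw [payload, payload, h q (Finset.mem_filter.1 hq).2]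
  unfold mergedPayload
  split_ifs with hp
  · rw [origVal, origVal, h p hp, hsup]
  · rw [hsup]

lemma mergedPayload_eq_ancPayload {Z : ν} {u z : ν → ℕ} (hz : ∀ p ∈ W, z p ≤ B)
    (hpar : ∀ q, G.dirEdgeIn W q Z → origVal W u q = z q ∧ payload u q = ancPayload G W z q) :
    mergedPayload G W B Z u = ancPayload G W z Z := by
  funext p
  unfold mergedPayload
  set direct := if G.dirEdgeIn W p Z then origVal W u p else 0
  set inherited := (Finset.univ.filter (G.dirEdgeIn W · Z)).sup fun q => payload u q p
  have inherited_le : ∀ c, (∀ q, G.dirEdgeIn W q Z → ancPayload G W z q p ≤ c) →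
      inherited ≤ c :=
    fun c hc => Finset.sup_le fun q hq => by
      have hq := (Finset.mem_filter.1 hq).2
      rw [(hpar q hq).2]
      exact hc q hq
  by_cases hpZ : TransGen (G.dirEdgeIn W) p Z
  · have direct_le : direct ≤ z p := by
      unfold direct
      split_ifs with hdir
      · rw [(hpar p hdir).1]
      · exact Nat.zero_le _
    have le_max : z p ≤ max direct inherited := by
      obtain ⟨b, hpb, hbZ⟩ := TransGen.tail'_iff.1 hpZ
      obtain rfl | hpb := reflTransGen_iff_eq_or_transGen.1 hpb
      · refine le_max_of_le_left ?_
        rw [show direct = _ from if_pos hbZ, (hpar _ hbZ).1]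
      · refine le_max_of_le_right ?_
        have hb := Finset.le_sup (f := fun q => payload u q p)
          (s := Finset.univ.filter (G.dirEdgeIn W · Z)) (by simpa using hbZ)
        rwa [(hpar b hbZ).2, ancPayload, if_pos hpb] at hb
    have hmax : max direct inherited = z p :=
      le_antisymm (max_le direct_le (inherited_le _ fun q _ => by
        unfold ancPayload; split_ifs <;> omega)) le_max
    rw [hmax, ancPayload, if_pos hpZ, min_eq_right (by grind [mem_of_transGen_dirEdgeIn])]
  · have hdirect : direct = 0 := if_neg fun h => hpZ (TransGen.single h)
    have hinherited : inherited = 0 := Nat.le_zero.1 <| inherited_le 0 fun q hq => by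
      rw [ancPayload, if_neg fun hpq => hpZ (hpq.tail hq)]
    rw [hdirect, hinherited, ancPayload, if_neg hpZ, max_self, min_eq_right (Nat.zero_le _)]

lemma origVal_withPayload (v : ν → ℕ) : origVal W (withPayload G W v) = v := by
  funext p
  unfold origVal withPayload
  split_ifs <;> simp

lemma payloadConsistent_withPayload {v : ν → ℕ} (hv : ∀ p ∈ W, v p ≤ B) :
    PayloadConsistent G W B (withPayload G W v) := by
  intro Z hZ
  rw [mergedPayload_eq_ancPayload hv fun q hq => ⟨by rw [origVal_withPayload], ?_⟩]
  · simp [withPayload, hZ]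
  · simp [payload, withPayload, hq.1]

lemma mergedPayload_eq_ancPayload_of_payloadConsistent {u : ν → ℕ}
    (hu : PayloadConsistent G W B u) (hz : ∀ p ∈ W, origVal W u p ≤ B) (Z : ν) :
    mergedPayload G W B Z u = ancPayload G W (origVal W u) Z := by
  induction Z using G.wellFounded_E.induction with
  | _ Z ih =>
    refine mergedPayload_eq_ancPayload hz fun q hq => ⟨rfl, ?_⟩
    rw [payload, hu q hq.1, decodePayload_encodePayload, ih q hq.2.2]

lemma origVal_eq_of_payloadConsistent {Y : Finset ν} (hYW : Y ⊆ W)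
    (hpath : ∀ p ∈ W \ Y, ∃ y ∈ Y, ReflTransGen (G.dirEdgeIn W) p y) {u v : ν → ℕ}
    (hu : PayloadConsistent G W B u) (hz : ∀ p ∈ W, origVal W u p ≤ B)
    (hY : ∀ y ∈ Y, u y = withPayload G W v y) {p : ν} (hp : p ∈ W) : origVal W u p = v p := by
  by_cases hpY : p ∈ Y
  · simp [origVal, hp, hY p hpY, withPayload]
  obtain ⟨y, hy, hpy⟩ := hpath p (Finset.mem_sdiff.2 ⟨hp, hpY⟩)
  have hpy : TransGen (G.dirEdgeIn W) p y :=
    (reflTransGen_iff_eq_or_transGen.1 hpy).resolve_left fun h => hpY (h ▸ hy)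
  -- the payload at `y` records the original value at its ancestor `p`
  have hanc : ancPayload G W (origVal W u) y = ancPayload G W v y := by
    apply encodePayload_injective
    rw [← mergedPayload_eq_ancPayload_of_payloadConsistent hu hz, ← hu y (hYW hy), hY y hy]
    simp [withPayload, hYW hy]
  simpa [ancPayload, hpy] using congrFun hanc p

lemma eq_withPayload_of_payloadConsistent {Y : Finset ν} (hYW : Y ⊆ W)
    (hpath : ∀ p ∈ W \ Y, ∃ y ∈ Y, ReflTransGen (G.dirEdgeIn W) p y) {u v : ν → ℕ}
    (hu : PayloadConsistent G W B u) (hz : ∀ p ∈ W, origVal W u p ≤ B)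
    (hY : ∀ y ∈ Y, u y = withPayload G W v y) (hout : ∀ p ∉ W, u p = withPayload G W v p) :
    u = withPayload G W v := by
  funext p
  by_cases hp : p ∈ W
  · have horig : ∀ q ∈ W, origVal W u q = v q :=
      fun q hq => origVal_eq_of_payloadConsistent hYW hpath hu hz hY hq
    rw [← Nat.pair_unpair (u p), hu p hp, mergedPayload_eq_ancPayload_of_payloadConsistent hu hz,
      ancPayload_congr horig, withPayload, if_pos hp, ← horig p hp, origVal, if_pos hp]
  · exact hout p hp

end Payload

section Noise

variable (G : CausalGraph ν) (W : Finset ν) (B : ℕ)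

noncomputable def noise (ε : ℝ) (Z : ν) (n : ℕ) (u : ν → ℕ) : ℝ :=
  (1 - ε) * (if n.unpair.2 = encodePayload (mergedPayload G W B Z u) then 1 else 0) +
    ε / (payloadCodes ν B).card

variable {G W B}

lemma noise_nonneg {ε : ℝ} (hε : ε ∈ Set.Icc (0 : ℝ) 1) (Z : ν) (n : ℕ) (u : ν → ℕ) :
    0 ≤ noise G W B ε Z n u := by
  have : 0 ≤ 1 - ε := sub_nonneg.2 hε.2
  have := hε.1
  unfold noise
  positivity

lemma noise_pos {ε : ℝ} (hε : ε ∈ Set.Icc (0 : ℝ) 1) (hε0 : 0 < ε) (Z : ν) (n : ℕ)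
    (u : ν → ℕ) : 0 < noise G W B ε Z n u := by
  have : 0 ≤ 1 - ε := sub_nonneg.2 hε.2
  have := (payloadCodes_nonempty (ν := ν) B).card_pos
  unfold noise
  positivity

lemma sum_noise_pair (ε : ℝ) (Z : ν) (a : ℕ) (u : ν → ℕ) :
    ∑ b ∈ payloadCodes ν B, noise G W B ε Z (Nat.pair a b) u = 1 := by
  have hcard : ((payloadCodes ν B).card : ℝ) ≠ 0 :=
    Nat.cast_ne_zero.2 (payloadCodes_nonempty B).card_pos.ne'
  simp only [noise, Nat.unpair_pair, Finset.sum_add_distrib, ← Finset.mul_sum,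
    Finset.sum_ite_eq', encodePayload_mem_payloadCodes (mergedPayload_le Z u), if_true,
    Finset.sum_const, nsmul_eq_mul]
  field_simp
  ring

lemma noise_zero (Z : ν) (n : ℕ) (u : ν → ℕ) :
    noise G W B 0 Z n u =
      if n.unpair.2 = encodePayload (mergedPayload G W B Z u) then 1 else 0 := by
  simp [noise]

lemma continuous_noise (Z : ν) (n : ℕ) (u : ν → ℕ) :
    Continuous fun ε => noise G W B ε Z n u := by
  unfold noise
  fun_prop

end Noise

namespace SEM

variable {G : CausalGraph ν} {W : Finset ν}

noncomputable def extDom (M : SEM G) (W : Finset ν) (B : ℕ) (p : ν) : Finset ℕ :=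
  if p ∈ W then (M.dom p ×ˢ payloadCodes ν B).image fun ab => Nat.pair ab.1 ab.2 else M.dom p

lemma mem_extDom {M : SEM G} {B : ℕ} {p : ν} (hp : p ∈ W) {n : ℕ} :
    n ∈ M.extDom W B p ↔ n.unpair.1 ∈ M.dom p ∧ n.unpair.2 ∈ payloadCodes ν B := by
  simp only [extDom, if_pos hp, Finset.mem_image, Finset.mem_product, Prod.exists]
  refine ⟨?_, fun h => ⟨_, _, h, Nat.pair_unpair n⟩⟩
  rintro ⟨a, b, hab, rfl⟩
  simpa using hab

lemma extDom_of_notMem (M : SEM G) (B : ℕ) {p : ν} (hp : p ∉ W) : M.extDom W B p = M.dom p :=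
  if_neg hp

lemma extDom_congr {M₁ M₂ : SEM G} (B : ℕ) {p : ν} (h : M₁.dom p = M₂.dom p) :
    M₁.extDom W B p = M₂.extDom W B p := by
  simp only [extDom, h]

lemma sum_extDom (M : SEM G) (B : ℕ) {p : ν} (hp : p ∈ W) (f : ℕ → ℝ) :
    ∑ n ∈ M.extDom W B p, f n = ∑ a ∈ M.dom p, ∑ b ∈ payloadCodes ν B, f (Nat.pair a b) := by
  rw [extDom, if_pos hp, Finset.sum_image fun _ _ _ _ h => by simpa [Prod.ext_iff] using h,
    Finset.sum_product]

noncomputable def extend (M : SEM G) (B : ℕ) (hW : W ⊆ G.obs) (ε : ℝ)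
    (hε : ε ∈ Set.Icc (0 : ℝ) 1) : SEM G where
  dom := M.extDom W B
  dom_ne p := by
    by_cases hp : p ∈ W
    · obtain ⟨a, ha⟩ := M.dom_ne p
      obtain ⟨b, hb⟩ := payloadCodes_nonempty (ν := ν) B
      exact ⟨Nat.pair a b, (mem_extDom hp).2 (by simpa using ⟨ha, hb⟩)⟩
    · simpa [extDom_of_notMem M B hp] using M.dom_ne p
  pU := M.pU
  pU_nonneg := M.pU_nonneg
  pU_sum u hu := by
    rw [extDom_of_notMem M B fun h => Finset.disjoint_left.1 G.disj (hW h) hu]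
    exact M.pU_sum u hu
  pO Z n u := if Z ∈ W then M.pO Z n.unpair.1 (origVal W u) * noise G W B ε Z n u
    else M.pO Z n (origVal W u)
  pO_nonneg Z n u := by
    split_ifs
    exacts [mul_nonneg (M.pO_nonneg _ _ _) (noise_nonneg hε _ _ _), M.pO_nonneg _ _ _]
  pO_sum Z hZ u := by
    split_ifs with hZW
    · simp only [sum_extDom M B hZW, Nat.unpair_pair, ← Finset.mul_sum, sum_noise_pair,
        mul_one]
      exact M.pO_sum Z hZ _
    · rw [extDom_of_notMem M B hZW]
      exact M.pO_sum Z hZ _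
  pO_par Z n u u' h := by
    have horig : ∀ p, G.E p Z → origVal W u p = origVal W u' p := fun p hp => by
      simp only [origVal, h p hp]
    simp only [M.pO_par _ _ (origVal W u) _ horig, noise,
      mergedPayload_congr (u := u) fun q hq => h q hq.2.2]

lemma extend_pO_apply (M : SEM G) (B : ℕ) (hW : W ⊆ G.obs) {ε : ℝ}
    (hε : ε ∈ Set.Icc (0 : ℝ) 1) (Z : ν) (w : ν → ℕ) :
    (M.extend B hW ε hε).pO Z (w Z) w =
      (if Z ∈ W then noise G W B ε Z (w Z) w else 1) * M.pO Z (origVal W w Z) (origVal W w) := by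
  by_cases hZ : Z ∈ W <;> simp [extend, hZ, origVal, mul_comm]

lemma origVal_mem_fullAssign {M : SEM G} {B : ℕ} {hW : W ⊆ G.obs} {ε : ℝ}
    {hε : ε ∈ Set.Icc (0 : ℝ) 1} {w : ν → ℕ} (hw : w ∈ (M.extend B hW ε hε).fullAssign) :
    origVal W w ∈ M.fullAssign := by
  rw [fullAssign, Fintype.mem_piFinset] at hw ⊢
  intro p
  by_cases hpW : p ∈ W
  · have hp : p ∈ G.verts := Finset.mem_union_left _ (hW hpW)
    have hwp := hw p
    simp only [hp, if_true, extend, mem_extDom hpW] at hwp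
    simpa [hp, origVal, hpW] using hwp.1
  · simpa [origVal, hpW, extend, extDom_of_notMem M B hpW] using hw p

lemma piecewise_mem_fullAssign_extend {M : SEM G} {B : ℕ} {hW : W ⊆ G.obs} {ε : ℝ}
    {hε : ε ∈ Set.Icc (0 : ℝ) 1} {u w : ν → ℕ} (hu : ∀ p ∈ W, u p ∈ M.extDom W B p)
    (hw : w ∈ M.fullAssign) : W.piecewise u w ∈ (M.extend B hW ε hε).fullAssign := by
  rw [fullAssign, Fintype.mem_piFinset] at hw ⊢
  intro p
  by_cases hpW : p ∈ W
  · have hp : p ∈ G.verts := Finset.mem_union_left _ (hW hpW)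
    simpa [hpW, hp, extend] using hu p hpW
  · simpa [hpW, extend, extDom_of_notMem M B hpW] using hw p

lemma Q_extend (M : SEM G) (B : ℕ) (hW : W ⊆ G.obs) {ε : ℝ} (hε : ε ∈ Set.Icc (0 : ℝ) 1)
    (A : Finset ν) {u : ν → ℕ} (hu : ∀ p ∈ W, u p ∈ M.extDom W B p) :
    (M.extend B hW ε hε).Q A u =
      (∏ Z ∈ A with Z ∈ W, noise G W B ε Z (u Z) u) * M.Q A (origVal W u) := by
  rw [Q, Q, Finset.mul_sum]
  refine Finset.sum_nbij' (origVal W) (fun w => W.piecewise u w) ?_ ?_ ?_ ?_ ?_ <;>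
    simp only [Finset.mem_filter, and_imp]
  · intro w hw hwu
    exact ⟨origVal_mem_fullAssign hw, fun p hp => by simp only [origVal, hwu p hp]⟩
  · intro w hw hwu
    refine ⟨piecewise_mem_fullAssign_extend hu hw, fun p hp => ?_⟩
    by_cases hpW : p ∈ W
    · simp [hpW]
    · simp [hpW, hwu p hp, origVal]
  · intro w _ hwu
    funext p
    by_cases hpW : p ∈ W
    · simp [hpW, hwu p (hW hpW)]
    · simp [hpW, origVal]
  · intro w _ hwu
    funext p
    by_cases hpW : p ∈ W
    · simpa [hpW, origVal] using (hwu p (hW hpW)).symm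
    · simp [hpW, origVal]
  · intro w _ hwu
    have hnoise : ∀ Z ∈ W, noise G W B ε Z (w Z) w = noise G W B ε Z (u Z) u := fun Z hZ => by
      simp only [noise, hwu Z (hW hZ), mergedPayload_congr (u := w) fun q hq => hwu q (hW hq.1)]
    have hpU : ∀ p ∈ G.unobs, (M.extend B hW ε hε).pU p (w p) = M.pU p (origVal W w p) :=
      fun p hp => by
        have hpW : p ∉ W := fun h => Finset.disjoint_left.1 G.disj (hW h) hp
        simp [extend, origVal, hpW]
    rw [Finset.prod_congr rfl fun Z _ => extend_pO_apply M B hW hε Z w, Finset.prod_mul_distrib,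
      ← Finset.prod_filter, Finset.prod_congr rfl fun Z hZ => hnoise Z (Finset.mem_filter.1 hZ).2,
      Finset.prod_congr rfl hpU, mul_assoc]

lemma mem_extDom_of_mem_obsAssign {M : SEM G} {B : ℕ} {hW : W ⊆ G.obs} {ε : ℝ}
    {hε : ε ∈ Set.Icc (0 : ℝ) 1} {u : ν → ℕ} (hu : u ∈ (M.extend B hW ε hε).obsAssign) :
    ∀ p ∈ W, u p ∈ M.extDom W B p :=
  fun p hp => (mem_obsAssign.1 hu).1 p (hW hp)

lemma origVal_mem_obsAssign {M : SEM G} {B : ℕ} {hW : W ⊆ G.obs} {ε : ℝ}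
    {hε : ε ∈ Set.Icc (0 : ℝ) 1} {u : ν → ℕ} (hu : u ∈ (M.extend B hW ε hε).obsAssign) :
    origVal W u ∈ M.obsAssign := by
  obtain ⟨hobs, hzero⟩ := mem_obsAssign.1 hu
  refine mem_obsAssign.2 ⟨fun p hp => ?_, fun p hp => ?_⟩
  · by_cases hpW : p ∈ W
    · simpa [origVal, hpW] using ((mem_extDom hpW).1 (hobs p hp)).1
    · simpa [origVal, hpW, extend, extDom_of_notMem M B hpW] using hobs p hp
  · simp [origVal, hzero p hp]

lemma extend_positive {M : SEM G} (hM : M.positive) (B : ℕ) (hW : W ⊆ G.obs) {ε : ℝ}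
    (hε : ε ∈ Set.Icc (0 : ℝ) 1) (hε0 : 0 < ε) : (M.extend B hW ε hε).positive := by
  intro u hu
  rw [P, Q_extend M B hW hε _ (mem_extDom_of_mem_obsAssign hu)]
  exact mul_pos (Finset.prod_pos fun Z _ => noise_pos hε hε0 _ _ _)
    (hM _ (origVal_mem_obsAssign hu))

lemma obsAssign_extend_congr {M₁ M₂ : SEM G} (hdom : ∀ i ∈ G.obs, M₁.dom i = M₂.dom i)
    (B : ℕ) (hW : W ⊆ G.obs) {ε ε' : ℝ} (hε : ε ∈ Set.Icc (0 : ℝ) 1)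
    (hε' : ε' ∈ Set.Icc (0 : ℝ) 1) :
    (M₁.extend B hW ε hε).obsAssign = (M₂.extend B hW ε' hε').obsAssign :=
  obsAssign_congr fun i hi => extDom_congr B (hdom i hi)

lemma Q_extend_eq_Q_extend {M₁ M₂ : SEM G} (hdom : ∀ i ∈ G.obs, M₁.dom i = M₂.dom i) (B : ℕ)
    (hW : W ⊆ G.obs) {ε : ℝ} (hε : ε ∈ Set.Icc (0 : ℝ) 1) {A : Finset ν}
    (hA : ∀ v ∈ M₁.obsAssign, M₁.Q A v = M₂.Q A v) :
    ∀ u ∈ (M₁.extend B hW ε hε).obsAssign,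
      (M₁.extend B hW ε hε).Q A u = (M₂.extend B hW ε hε).Q A u := by
  intro u hu
  have hu₂ := obsAssign_extend_congr hdom B hW hε hε ▸ hu
  rw [Q_extend M₁ B hW hε A (mem_extDom_of_mem_obsAssign hu),
    Q_extend M₂ B hW hε A (mem_extDom_of_mem_obsAssign hu₂), hA _ (origVal_mem_obsAssign hu)]

lemma Px_extend (M : SEM G) (B : ℕ) (hW : W ⊆ G.obs) {ε : ℝ} (hε : ε ∈ Set.Icc (0 : ℝ) 1)
    (Y : Finset ν) (x y : ν → ℕ) :
    (M.extend B hW ε hε).Px (G.obs \ W) x Y y =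
      ∑ u ∈ (M.extend B hW ε hε).obsAssign with
          (∀ i ∈ G.obs \ W, u i = x i) ∧ ∀ i ∈ Y, u i = y i,
        (∏ Z ∈ W, noise G W B ε Z (u Z) u) * M.Q W (origVal W u) := by
  rw [Px, Finset.sdiff_sdiff_eq_self hW]
  refine Finset.sum_congr rfl fun u hu => ?_
  rw [Q_extend M B hW hε W (mem_extDom_of_mem_obsAssign (Finset.mem_filter.1 hu).1),
    Finset.filter_true_of_mem fun _ h => h]

end SEM

section Identification

variable {G : CausalGraph ν} {𝔸 : Finset (Finset ν)} {W Y : Finset ν} {B : ℕ}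

lemma sum_noise_zero (S : Finset (ν → ℕ)) (c : (ν → ℕ) → ℝ) :
    ∑ u ∈ S, (∏ Z ∈ W, noise G W B 0 Z (u Z) u) * c u =
      ∑ u ∈ S with PayloadConsistent G W B u, c u := by
  simp only [noise_zero, Finset.prod_boole, boole_mul, Finset.sum_filter]
  exact Finset.sum_congr rfl fun u _ => by unfold PayloadConsistent; congr

lemma continuous_sum_noise (S : Finset (ν → ℕ)) (c : (ν → ℕ) → ℝ) :
    Continuous fun ε => ∑ u ∈ S, (∏ Z ∈ W, noise G W B ε Z (u Z) u) * c u :=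
  continuous_finsetSum _ fun u _ =>
    (continuous_finsetProd _ fun Z _ => continuous_noise Z (u Z) u).mul continuous_const

lemma withPayload_mem_obsAssign {M : SEM G} (hB : ∀ p ∈ W, ∀ a ∈ M.dom p, a ≤ B)
    (hW : W ⊆ G.obs) {ε : ℝ} (hε : ε ∈ Set.Icc (0 : ℝ) 1) {v : ν → ℕ} (hv : v ∈ M.obsAssign) :
    withPayload G W v ∈ (M.extend B hW ε hε).obsAssign := by
  obtain ⟨hobs, hzero⟩ := SEM.mem_obsAssign.1 hv
  refine SEM.mem_obsAssign.2 ⟨fun p hp => ?_, fun p hp => ?_⟩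
  · by_cases hpW : p ∈ W
    · refine (SEM.mem_extDom hpW).2 ?_
      simp only [withPayload, if_pos hpW, Nat.unpair_pair]
      refine ⟨hobs p hp, encodePayload_mem_payloadCodes fun q => ?_⟩
      unfold ancPayload
      split_ifs with hq
      · have := hB q (mem_of_transGen_dirEdgeIn hq) _ (hobs q (hW (mem_of_transGen_dirEdgeIn hq)))
        omega
      · omega
    · simpa [withPayload, hpW, SEM.extend, SEM.extDom_of_notMem M B hpW] using hobs p hp
  · have hpW : p ∉ W := fun h => hp (hW h)
    simp [withPayload, hpW, hzero p hp]

lemma filter_payloadConsistent_eq_singleton {M : SEM G} (hB : ∀ p ∈ W, ∀ a ∈ M.dom p, a ≤ B)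
    (hW : W ⊆ G.obs) {ε : ℝ} (hε : ε ∈ Set.Icc (0 : ℝ) 1) (hYW : Y ⊆ W)
    (hpath : ∀ p ∈ W \ Y, ∃ y ∈ Y, ReflTransGen (G.dirEdgeIn W) p y) {v : ν → ℕ}
    (hv : v ∈ M.obsAssign) :
    {u ∈ (M.extend B hW ε hε).obsAssign |
        (∀ i ∈ G.obs \ W, u i = withPayload G W v i) ∧ ∀ i ∈ Y, u i = withPayload G W v i}.filter
      (PayloadConsistent G W B) = {withPayload G W v} := by
  refine Finset.eq_singleton_iff_unique_mem.2 ⟨?_, fun u hu => ?_⟩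
  · rw [Finset.mem_filter, Finset.mem_filter]
    refine ⟨⟨withPayload_mem_obsAssign hB hW hε hv, fun _ _ => rfl, fun _ _ => rfl⟩,
      payloadConsistent_withPayload fun p hp => hB p hp _ ((SEM.mem_obsAssign.1 hv).1 p (hW hp))⟩
  simp only [Finset.mem_filter] at hu
  obtain ⟨⟨hu, hX, hY⟩, hcons⟩ := hu
  refine eq_withPayload_of_payloadConsistent hYW hpath hcons
    (fun p hp => hB p hp _ ((SEM.mem_obsAssign.1 (SEM.origVal_mem_obsAssign hu)).1 p (hW hp)))
    hY fun p hp => ?_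
  by_cases hpo : p ∈ G.obs
  · exact hX p (Finset.mem_sdiff.2 ⟨hpo, hp⟩)
  · simp [withPayload, hp, (SEM.mem_obsAssign.1 hu).2 p hpo, (SEM.mem_obsAssign.1 hv).2 p hpo]

theorem Q_eq_of_gIdentifiable (hW : W ⊆ G.obs) (hYW : Y ⊆ W)
    (hpath : ∀ p ∈ W \ Y, ∃ y ∈ Y, ReflTransGen (G.dirEdgeIn W) p y)
    (H : G.GIdentifiable 𝔸 (G.obs \ W) Y) {M₁ M₂ : SEM G} (h₁ : M₁.positive) (h₂ : M₂.positive)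
    (hdom : ∀ i ∈ G.obs, M₁.dom i = M₂.dom i)
    (hQ : ∀ A ∈ 𝔸, ∀ v ∈ M₁.obsAssign, M₁.Q A v = M₂.Q A v) {v : ν → ℕ}
    (hv : v ∈ M₁.obsAssign) : M₁.Q W v = M₂.Q W v := by
  obtain ⟨B, hB⟩ : ∃ B, ∀ p ∈ W, ∀ a ∈ M₁.dom p, a ≤ B :=
    ⟨W.sup fun p => (M₁.dom p).sup id, fun p hp a ha =>
      (Finset.le_sup (f := id) ha).trans (Finset.le_sup (f := fun p => (M₁.dom p).sup id) hp)⟩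
  set u := withPayload G W v
  have h0 : (0 : ℝ) ∈ Set.Icc 0 1 := Set.left_mem_Icc.2 zero_le_one
  set S := {u' ∈ (M₁.extend B hW 0 h0).obsAssign |
    (∀ i ∈ G.obs \ W, u' i = u i) ∧ ∀ i ∈ Y, u' i = u i}
  let F (M : SEM G) (ε : ℝ) : ℝ :=
    ∑ u' ∈ S, (∏ Z ∈ W, noise G W B ε Z (u' Z) u') * M.Q W (origVal W u')
  have hPx {M : SEM G} (hM : ∀ i ∈ G.obs, M₁.dom i = M.dom i) {ε : ℝ}
      (hε : ε ∈ Set.Icc (0 : ℝ) 1) : (M.extend B hW ε hε).Px (G.obs \ W) u Y u = F M ε := by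
    rw [SEM.Px_extend, SEM.obsAssign_extend_congr fun i hi => (hM i hi).symm]
  have hlim : Set.EqOn (F M₁) (F M₂) (Set.Ioo 0 1) := fun ε hε => by
    have hε' := Set.Ioo_subset_Icc_self hε
    have hu := SEM.mem_obsAssign.1 (withPayload_mem_obsAssign hB hW hε' hv)
    rw [← hPx (fun _ _ => rfl) hε', ← hPx hdom hε']
    exact H _ _ (SEM.extend_positive h₁ B hW hε' hε.1) (SEM.extend_positive h₂ B hW hε' hε.1)
      (fun i hi => SEM.extDom_congr B (hdom i hi))
      (fun A hA => SEM.Q_extend_eq_Q_extend hdom B hW hε' (hQ A hA)) u u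
      (fun i hi => hu.1 i (Finset.mem_sdiff.1 hi).1) fun i hi => hu.1 i (hW (hYW hi))
  have hF0 (M : SEM G) : F M 0 = M.Q W v := by
    simp only [F, sum_noise_zero, S, filter_payloadConsistent_eq_singleton hB hW h0 hYW hpath hv,
      Finset.sum_singleton, u, origVal_withPayload]
  have hcont (M : SEM G) : Continuous (F M) := continuous_sum_noise _ _
  rw [← hF0 M₁, ← hF0 M₂]
  exact hlim.closure (hcont M₁) (hcont M₂) (by simp [closure_Ioo zero_ne_one])

theorem qGIdentifiable_of_gIdentifiable (hW : W ⊆ G.obs) (hYW : Y ⊆ W)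
    (hpath : ∀ p ∈ W \ Y, ∃ y ∈ Y, ReflTransGen (G.dirEdgeIn W) p y)
    (H : G.GIdentifiable 𝔸 (G.obs \ W) Y) : G.QGIdentifiable 𝔸 W := by
  intro M₁ M₂ h₁ h₂ hdom hQ x w hx hw
  set v : ν → ℕ := fun p => if p ∈ W then w p else if p ∈ G.obs then x p else 0
  have hxv : ∀ i ∈ G.obs \ W, x i = v i := fun i hi => by
    simp [v, (Finset.mem_sdiff.1 hi).2, (Finset.mem_sdiff.1 hi).1]
  have hwv : ∀ i ∈ W, w i = v i := fun i hi => by simp [v, hi]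
  have hv₁ : v ∈ M₁.obsAssign := by
    refine SEM.mem_obsAssign.2 ⟨fun p hp => ?_, fun p hp => ?_⟩
    · by_cases hpW : p ∈ W
      · exact hwv p hpW ▸ hw p hpW
      · exact hxv p (Finset.mem_sdiff.2 ⟨hp, hpW⟩) ▸ hx p (Finset.mem_sdiff.2 ⟨hp, hpW⟩)
    · have hpW : p ∉ W := fun h => hp (hW h)
      simp [v, hp, hpW]
  have hv₂ : v ∈ M₂.obsAssign := SEM.obsAssign_congr hdom ▸ hv₁
  have hobs : G.obs ⊆ (G.obs \ W) ∪ W := by simp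
  rw [M₁.Px_congr _ _ hxv hwv, M₂.Px_congr _ _ hxv hwv, M₁.Px_self hobs hv₁,
    M₂.Px_self hobs hv₂, Finset.sdiff_sdiff_eq_self hW]
  exact Q_eq_of_gIdentifiable hW hYW hpath H h₁ h₂ hdom hQ hv₁

end Identification

end CausalGraph

theorem gid_effect_iff_gid_QW_general
    {ν : Type} [Fintype ν] [DecidableEq ν] (G : CausalGraph ν)
    (𝔸 : Finset (Finset ν))
    (Y W : Finset ν) (hYW : Y ⊂ W) (hWV : W ⊂ G.obs)
    (hpath : ∀ w ∈ W \ Y, ∃ y ∈ Y, Relation.ReflTransGen (G.dirEdgeIn W) w y) :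
    G.GIdentifiable 𝔸 (G.obs \ W) Y ↔ G.QGIdentifiable 𝔸 W :=
  ⟨CausalGraph.qGIdentifiable_of_gIdentifiable hWV.subset hYW.subset hpath,
    fun h => h.gIdentifiable hWV.subset Y⟩

/-- Lemma 10. If `Y ⊊ W ⊊ V` and every `W' ∈ W ∖ Y` has a directed
path in `G[W]` to some variable of `Y`, then the causal effect of `V ∖ W` on `Y` is
g-identifiable from `(𝔸, G)` iff `Q[W]` is g-identifiable from `(𝔸, G)`. -/
theorem gid_effect_iff_gid_QW
    {ν : Type} [Fintype ν] [DecidableEq ν] (G : CausalGraph ν)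
    (𝔸 : Finset (Finset ν)) (h𝔸 : ∀ A ∈ 𝔸, A ⊆ G.obs)
    (Y W : Finset ν) (hYW : Y ⊂ W) (hWV : W ⊂ G.obs)
    (hpath : ∀ w ∈ W \ Y, ∃ y ∈ Y, Relation.ReflTransGen (G.dirEdgeIn W) w y) :
    G.GIdentifiable 𝔸 (G.obs \ W) Y ↔ G.QGIdentifiable 𝔸 W :=
  gid_effect_iff_gid_QW_general G 𝔸 Y W hYW hWV hpath
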